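/- Let n = t(t+1)/2 + k with t ≥ 1 and 0 ≤ k ≤ t. Then X₄(n) = (t−1)·2^t + 1 + k·2^t, where X₄(n) = Σ_{j=1}^{n} 2^{f(j)} and f(j) is the largest m with j > m(m+1)/2. -/

import Mathlib

/-- `hanoiF j` is the largest nonnegative integer `m` with `j > m(m+1)/2`. -/
def hanoiF (j : ℕ) : ℕ := Nat.findGreatest (fun m => m * (m + 1) / 2 < j) j

/-- Frame–Stewart move count `X₄(n) = Σ_{j=1}^n 2^{f(j)}`. -/
def X4 (n : ℕ) : ℕ := ∑ j ∈ Finset.Icc 1 n, 2 ^ hanoiF j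

/-!
On the block of indices `j` with `t(t+1)/2 < j ≤ (t+1)(t+2)/2` we have `f(j) = t`, so each of these
`t + 1` steps adds `2^t` to `X₄`. Summing over the blocks gives `X₄(t(t+1)/2) + 2^t = t·2^t + 1`
by induction on `t` (written with `+ 2^t` on the left so that it holds at `t = 0` without truncated
subtraction), and a partial block of `k` steps adds `k·2^t`.
-/

lemma triangle_succ (t : ℕ) : (t + 1) * (t + 2) / 2 = t * (t + 1) / 2 + (t + 1) := by
  have : (t + 1) * (t + 2) = t * (t + 1) + 2 * (t + 1) := by ring
  omega

lemma le_triangle (t : ℕ) : t ≤ t * (t + 1) / 2 := by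
  have : t * (t + 1) = t * t + t := by ring
  have := Nat.le_mul_self t
  omega

lemma triangle_mono {s t : ℕ} (h : s ≤ t) : s * (s + 1) / 2 ≤ t * (t + 1) / 2 :=
  Nat.div_le_div_right (Nat.mul_le_mul h (by omega))

lemma hanoiF_eq_of_mem {t j : ℕ} (hlo : t * (t + 1) / 2 < j) (hhi : j ≤ (t + 1) * (t + 2) / 2) :
    hanoiF j = t := by
  rw [hanoiF, Nat.findGreatest_eq_iff]
  refine ⟨(le_triangle t).trans hlo.le, fun _ => hlo, fun m htm _ hm => ?_⟩
  have : (t + 1) * (t + 2) / 2 ≤ m * (m + 1) / 2 := triangle_mono (show t + 1 ≤ m by omega)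
  omega

lemma X4_succ (n : ℕ) : X4 (n + 1) = X4 n + 2 ^ hanoiF (n + 1) :=
  Finset.sum_Icc_succ_top (by omega) _

lemma X4_triangle_add {t k : ℕ} (hk : k ≤ t + 1) :
    X4 (t * (t + 1) / 2 + k) = X4 (t * (t + 1) / 2) + k * 2 ^ t := by
  induction k with
  | zero => simp
  | succ k ih =>
    have hf : hanoiF (t * (t + 1) / 2 + k + 1) = t :=
      hanoiF_eq_of_mem (by omega) (by rw [triangle_succ]; omega)
    rw [← add_assoc, X4_succ, ih (by omega), hf, add_one_mul, add_assoc]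

lemma X4_triangle_add_two_pow (t : ℕ) : X4 (t * (t + 1) / 2) + 2 ^ t = t * 2 ^ t + 1 := by
  induction t with
  | zero => rfl
  | succ t ih =>
    rw [show (t + 1) * (t + 1 + 1) / 2 = t * (t + 1) / 2 + (t + 1) from triangle_succ t,
      X4_triangle_add le_rfl, pow_succ]
    linear_combination ih

/-- For `n = t(t+1)/2 + k` with `t ≥ 1` and `0 ≤ k ≤ t`,
`X₄(n) = (t−1)·2^t + 1 + k·2^t`. -/
theorem stmt_9 (t k : ℕ) (ht : 1 ≤ t) (hk : k ≤ t) :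
    X4 (t * (t + 1) / 2 + k) = (t - 1) * 2 ^ t + 1 + k * 2 ^ t := by
  obtain ⟨s, rfl⟩ : ∃ s, t = s + 1 := ⟨t - 1, by omega⟩
  rw [X4_triangle_add (by omega), Nat.add_sub_cancel]
  linarith [X4_triangle_add_two_pow (s + 1)]
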